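/- Let Q^p, Q^s be independent Poisson with means γ^p C and γ^s C (0 < γ^s < γ^p < 1, γ^p+γ^s < 1). Then the diversity gain d = lim_C -(1/C)log P(Q^p+Q^s > C, Q^s>0) satisfies γ^p + γ^s - 1 - log(γ^p+γ^s) ≤ d ≤ γ^p - 1 - log γ^p (whenever the limit exists; otherwise liminf and limsup satisfy the respective bounds). -/

import Mathlib

/-!
Chernoff's bound
`P(Q^p + Q^s > C) ≤ E exp (t (Q^p + Q^s - C)) = exp ((γ^p + γ^s) C (e^t - 1) - t C)`
at the optimal `e^t = 1 / (γ^p + γ^s)` gives the lower bound on the decay rate. Conversely the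
outage event contains `{Q^p = C, Q^s > 0}`, of probability
`e^{-γ^p C} (γ^p C)^C / C! · (1 - e^{-γ^s C})`, and Stirling's formula
`log C! = C log C - C + o(C)` turns its exponent into `γ^p - 1 - log γ^p`.
-/

open Filter Real

noncomputable def poisP (l : ℝ) (k : ℕ) : ℝ := Real.exp (-l) * l ^ k / (Nat.factorial k)

noncomputable def secOutage (lp ls : ℝ) (C : ℝ) : ℝ :=
  ∑' j : ℕ, ∑' k : ℕ, if C < (j : ℝ) + (k : ℝ) ∧ 0 < k then poisP lp j * poisP ls k else 0

open Topology
open scoped Nat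

section Poisson

lemma poisP_nonneg {l : ℝ} (hl : 0 ≤ l) (k : ℕ) : 0 ≤ poisP l k := by
  unfold poisP; positivity

lemma poisP_pos {l : ℝ} (hl : 0 < l) (k : ℕ) : 0 < poisP l k := by
  unfold poisP; positivity

lemma hasSum_poisP_mul_exp (l t : ℝ) :
    HasSum (fun k : ℕ => poisP l k * exp (t * k)) (exp (l * (exp t - 1))) := by
  have h := (NormedSpace.expSeries_div_hasSum_exp (l * exp t)).mul_left (exp (-l))
  rw [← exp_eq_exp_ℝ, ← exp_add, show -l + l * exp t = l * (exp t - 1) by ring] at h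
  refine h.congr_fun fun k => ?_
  rw [poisP, mul_comm t, exp_nat_mul, mul_pow]
  ring

lemma hasSum_poisP (l : ℝ) : HasSum (poisP l) 1 := by
  simpa using hasSum_poisP_mul_exp l 0

lemma hasSum_poisP_of_pos (l : ℝ) :
    HasSum (fun k : ℕ => if 0 < k then poisP l k else 0) (1 - exp (-l)) := by
  have h := (hasSum_poisP l).sub (hasSum_ite_eq 0 (poisP l 0))
  rw [show poisP l 0 = exp (-l) by simp [poisP]] at h
  refine h.congr_fun fun k => ?_
  rcases Nat.eq_zero_or_pos k with rfl | hk
  · simp [poisP]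
  · simp [hk, hk.ne']

lemma tendsto_log_factorial_div_sub_log :
    Tendsto (fun n : ℕ => log n ! / n - log n) atTop (𝓝 (-1)) := by
  have hstirling : Tendsto (fun n : ℕ => log (Stirling.stirlingSeq n) / n) atTop (𝓝 0) :=
    ((continuousAt_log (sqrt_pos.2 pi_pos).ne').tendsto.comp
      Stirling.tendsto_stirlingSeq_sqrt_pi).div_atTop tendsto_natCast_atTop_atTop
  have hlog : Tendsto (fun n : ℕ => log (2 * n) / (2 * n)) atTop (𝓝 0) :=
    isLittleO_log_id_atTop.tendsto_div_nhds_zero.comp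
      (tendsto_natCast_atTop_atTop.const_mul_atTop two_pos)
  have hsum := (hstirling.add hlog).sub_const 1
  rw [zero_add, zero_sub] at hsum
  refine hsum.congr' ?_
  filter_upwards [eventually_gt_atTop 0] with n hn
  have hn' : (n : ℝ) ≠ 0 := by positivity
  rw [Stirling.log_stirlingSeq_formula, log_div hn' (exp_ne_zero 1), log_exp]
  field_simp
  ring

lemma tendsto_neg_log_poisP_div {γ : ℝ} (hγ : 0 < γ) :
    Tendsto (fun n : ℕ => -(1 / (n : ℝ)) * log (poisP (γ * n) n)) atTop
      (𝓝 (γ - 1 - log γ)) := by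
  rw [show γ - 1 - log γ = γ - log γ + -1 by ring]
  refine (tendsto_log_factorial_div_sub_log.const_add (γ - log γ)).congr' ?_
  filter_upwards [eventually_gt_atTop 0] with n hn
  have hn' : (n : ℝ) ≠ 0 := by positivity
  rw [poisP, log_div (by positivity) (by positivity), log_mul (exp_ne_zero _) (by positivity),
    log_exp, log_pow, log_mul hγ.ne' hn']
  field_simp
  ring

end Poisson

section DoubleSum

variable {α β : Type*}

lemma tsum_le_of_nonneg_of_le_of_hasSum {f g : β → ℝ} {a : ℝ} (hf : ∀ b, 0 ≤ f b)
    (hfg : ∀ b, f b ≤ g b) (hg : HasSum g a) : ∑' b, f b ≤ a :=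
  hasSum_le hfg (hg.summable.of_nonneg_of_le hf hfg).hasSum hg

variable {f g : α → β → ℝ} {G : α → ℝ}

lemma summable_tsum_of_nonneg_of_le (hf : ∀ a b, 0 ≤ f a b) (hfg : ∀ a b, f a b ≤ g a b)
    (hg : ∀ a, HasSum (g a) (G a)) (hG : Summable G) : Summable fun a => ∑' b, f a b :=
  hG.of_nonneg_of_le (fun a => tsum_nonneg (hf a)) fun a =>
    tsum_le_of_nonneg_of_le_of_hasSum (hf a) (hfg a) (hg a)

lemma tsum_tsum_le_of_le (hf : ∀ a b, 0 ≤ f a b) (hfg : ∀ a b, f a b ≤ g a b)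
    (hg : ∀ a, HasSum (g a) (G a)) (hG : Summable G) : ∑' a, ∑' b, f a b ≤ ∑' a, G a :=
  (summable_tsum_of_nonneg_of_le hf hfg hg hG).tsum_le_tsum
    (fun a => tsum_le_of_nonneg_of_le_of_hasSum (hf a) (hfg a) (hg a)) hG

end DoubleSum

section Outage

variable {lp ls : ℝ}

lemma outage_term_nonneg (hlp : 0 ≤ lp) (hls : 0 ≤ ls) (C : ℝ) (j k : ℕ) :
    0 ≤ if C < (j : ℝ) + k ∧ 0 < k then poisP lp j * poisP ls k else 0 := by
  split_ifs
  · exact mul_nonneg (poisP_nonneg hlp j) (poisP_nonneg hls k)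
  · exact le_rfl

lemma poisP_mul_le_secOutage (hlp : 0 ≤ lp) (hls : 0 ≤ ls) {C : ℝ} {j : ℕ} (hj : C ≤ j) :
    poisP lp j * (1 - exp (-ls)) ≤ secOutage lp ls C := by
  have hterm_le : ∀ j k : ℕ, (if C < (j : ℝ) + k ∧ 0 < k then poisP lp j * poisP ls k else 0)
      ≤ poisP lp j * poisP ls k := fun j k => by
    split_ifs
    · exact le_rfl
    · exact mul_nonneg (poisP_nonneg hlp j) (poisP_nonneg hls k)
  have hrow : HasSum (fun k : ℕ => if C < (j : ℝ) + k ∧ 0 < k then poisP lp j * poisP ls k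
      else 0) (poisP lp j * (1 - exp (-ls))) := by
    refine ((hasSum_poisP_of_pos ls).mul_left (poisP lp j)).congr_fun fun k => ?_
    rcases Nat.eq_zero_or_pos k with rfl | hk
    · simp
    · have : C < (j : ℝ) + k := by
        have : (0 : ℝ) < k := by exact_mod_cast hk
        linarith
      simp [this, hk]
  rw [← hrow.tsum_eq]
  have hsummable := summable_tsum_of_nonneg_of_le (outage_term_nonneg hlp hls C) hterm_le
    (fun j => (hasSum_poisP ls).mul_left (poisP lp j)) (by simpa using (hasSum_poisP lp).summable)
  exact hsummable.le_tsum j fun j _ => tsum_nonneg (outage_term_nonneg hlp hls C j)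

lemma secOutage_pos (hlp : 0 < lp) (hls : 0 < ls) (n : ℕ) : 0 < secOutage lp ls n :=
  (mul_pos (poisP_pos hlp n) (sub_pos.2 (exp_lt_one_iff.2 (neg_lt_zero.2 hls)))).trans_le
    (poisP_mul_le_secOutage hlp.le hls.le le_rfl)

lemma secOutage_le_exp (hlp : 0 ≤ lp) (hls : 0 ≤ ls) (C : ℝ) {t : ℝ} (ht : 0 ≤ t) :
    secOutage lp ls C ≤ exp ((lp + ls) * (exp t - 1) - t * C) := by
  set w : ℕ → ℝ := fun k => poisP ls k * exp (t * k)
  set W : ℕ → ℝ := fun j => poisP lp j * exp (t * j) * exp (ls * (exp t - 1)) * exp (-(t * C))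
  have hrow : ∀ j : ℕ, HasSum (fun k => poisP lp j * exp (t * j) * w k * exp (-(t * C))) (W j) :=
    fun j => (((hasSum_poisP_mul_exp ls t).mul_left _).mul_right _).congr_fun fun k => by ring
  have hcol : HasSum W (exp ((lp + ls) * (exp t - 1) - t * C)) := by
    rw [show (lp + ls) * (exp t - 1) - t * C = lp * (exp t - 1) + ls * (exp t - 1) + -(t * C)
      by ring, exp_add, exp_add]
    exact ((hasSum_poisP_mul_exp lp t).mul_right _).mul_right _
  rw [← hcol.tsum_eq]
  refine tsum_tsum_le_of_le (outage_term_nonneg hlp hls C) (fun j k => ?_) hrow hcol.summable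
  split_ifs with hjk
  · have hexp : 1 ≤ exp (t * j) * exp (t * k) * exp (-(t * C)) := by
      rw [← exp_add, ← exp_add]
      exact one_le_exp (by nlinarith [hjk.1])
    calc poisP lp j * poisP ls k ≤ poisP lp j * poisP ls k * (exp (t * j) * exp (t * k) *
          exp (-(t * C))) :=
          le_mul_of_one_le_right (mul_nonneg (poisP_nonneg hlp j) (poisP_nonneg hls k)) hexp
      _ = _ := by ring
  · have := poisP_nonneg hlp j
    have := poisP_nonneg hls k
    positivity

lemma le_neg_log_secOutage_div {γp γs : ℝ} (hp : 0 < γp) (hs : 0 < γs) (hγ : γp + γs ≤ 1)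
    {n : ℕ} (hn : 0 < n) :
    γp + γs - 1 - log (γp + γs) ≤ -(1 / (n : ℝ)) * log (secOutage (γp * n) (γs * n) n) := by
  have hn' : (0 : ℝ) < n := by exact_mod_cast hn
  have hsum : 0 < γp + γs := by linarith
  have hchernoff := secOutage_le_exp (mul_pos hp hn').le (mul_pos hs hn').le n
    (neg_nonneg.2 (log_nonpos hsum.le hγ))
  rw [exp_neg, exp_log hsum] at hchernoff
  have hlog := log_le_log (secOutage_pos (mul_pos hp hn') (mul_pos hs hn') n) hchernoff
  rw [log_exp] at hlog
  rw [neg_mul, le_neg, one_div_mul_eq_div, div_le_iff₀ hn']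
  refine hlog.trans_eq ?_
  field_simp
  ring

lemma tendsto_neg_log_one_sub_exp_div {γ : ℝ} (hγ : 0 < γ) :
    Tendsto (fun n : ℕ => -(1 / (n : ℝ)) * log (1 - exp (-(γ * n)))) atTop (𝓝 0) := by
  have hexp : Tendsto (fun n : ℕ => exp (-(γ * n))) atTop (𝓝 0) :=
    tendsto_exp_neg_atTop_nhds_zero.comp (tendsto_natCast_atTop_atTop.const_mul_atTop hγ)
  have hlog := (continuousAt_log one_ne_zero).tendsto.comp (by simpa using hexp.const_sub 1)
  simpa using tendsto_one_div_atTop_nhds_zero_nat.neg.mul hlog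

end Outage

lemma le_liminf_and_limsup_le_of_tendsto {α : Type*} {l : Filter α} [l.NeBot] {u g : α → ℝ}
    {a b : ℝ} (hlow : ∀ᶠ x in l, a ≤ u x) (hup : ∀ᶠ x in l, u x ≤ g x)
    (hg : Tendsto g l (𝓝 b)) : a ≤ liminf u l ∧ limsup u l ≤ b := by
  have hbdd : IsBoundedUnder (· ≤ ·) l u := hg.isBoundedUnder_le.mono_le hup
  refine ⟨le_liminf_of_le hbdd.isCoboundedUnder_ge hlow, ?_⟩
  calc limsup u l ≤ limsup g l := limsup_le_limsup hup
        (isBoundedUnder_of_eventually_ge hlow).isCoboundedUnder_le hg.isBoundedUnder_le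
    _ = b := hg.limsup_eq

theorem secondary_diversity_bounds_general (γp γs : ℝ)
    (h0 : 0 < γs) (h1 : γs < γp) (h3 : γp + γs < 1) :
    γp + γs - 1 - Real.log (γp + γs) ≤
        Filter.liminf (fun C : ℕ =>
          -(1 / (C : ℝ)) * Real.log (secOutage (γp * C) (γs * C) C)) atTop ∧
      Filter.limsup (fun C : ℕ =>
          -(1 / (C : ℝ)) * Real.log (secOutage (γp * C) (γs * C) C)) atTop ≤
        γp - 1 - Real.log γp := by
  have hγp : 0 < γp := h0.trans h1
  have hgap : ∀ n : ℕ, 0 < n → 0 < 1 - exp (-(γs * n)) := fun n hn =>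
    sub_pos.2 (exp_lt_one_iff.2 (by simp; positivity))
  refine le_liminf_and_limsup_le_of_tendsto
    (g := fun n : ℕ => -(1 / (n : ℝ)) * log (poisP (γp * n) n * (1 - exp (-(γs * n)))))
    ?_ ?_ ?_
  · filter_upwards [eventually_gt_atTop 0] with n hn
    exact le_neg_log_secOutage_div hγp h0 h3.le hn
  · filter_upwards [eventually_gt_atTop 0] with n hn
    refine mul_le_mul_of_nonpos_left (log_le_log ?_ ?_) (by simp)
    · exact mul_pos (poisP_pos (by positivity) n) (hgap n hn)
    · exact poisP_mul_le_secOutage (by positivity) (by positivity) le_rfl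
  · have h := (tendsto_neg_log_poisP_div hγp).add (tendsto_neg_log_one_sub_exp_div h0)
    rw [add_zero] at h
    refine h.congr' ?_
    filter_upwards [eventually_gt_atTop 0] with n hn
    rw [log_mul (poisP_pos (by positivity) n).ne' (hgap n hn).ne', mul_add]

/-- Secondary diversity gain bounds in the linear scaling regime: with
`Q^p, Q^s` independent Poisson of means `γ^p C` and `γ^s C`, the normalized decay rate
of `P(Q^p+Q^s > C, Q^s>0)` satisfies
`γ^p + γ^s - 1 - log(γ^p+γ^s) ≤ liminf` and `limsup ≤ γ^p - 1 - log γ^p`. -/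
theorem secondary_diversity_bounds (γp γs : ℝ)
    (h0 : 0 < γs) (h1 : γs < γp) (h2 : γp < 1) (h3 : γp + γs < 1) :
    γp + γs - 1 - Real.log (γp + γs) ≤
        Filter.liminf (fun C : ℕ =>
          -(1 / (C : ℝ)) * Real.log (secOutage (γp * C) (γs * C) C)) atTop ∧
      Filter.limsup (fun C : ℕ =>
          -(1 / (C : ℝ)) * Real.log (secOutage (γp * C) (γs * C) C)) atTop ≤
        γp - 1 - Real.log γp :=
  secondary_diversity_bounds_general γp γs h0 h1 h3
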